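/- For any finite set S of constructor patterns, the recursive procedure minimum (which processes the elements of S one by one, maintaining a kernel: if the current pattern q is subsumed by the remaining patterns together with the kernel, it returns the smaller of the results of recursing with q added to the kernel and of recursing with q discarded; otherwise it adds q to the kernel; when no patterns remain it returns the kernel) returns a valid subset S' ⊆ S of minimum cardinality, i.e., ⟦S'⟧ = ⟦S⟧ and |S'| ≤ |S''| for every S'' ⊆ S with ⟦S''⟧ = ⟦S⟧. -/

import Mathlib

/-- A constructor signature: a type of constructor symbols with arities. -/
structure Sig where
  C : Type
  ar : C → ℕ

/-- Values: ground constructor terms over the signature `S`. -/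
inductive Val (S : Sig) : Type where
  | mk : (c : S.C) → (Fin (S.ar c) → Val S) → Val S

/-- Constructor patterns: terms over the constructors and variables. -/
inductive Pat (S : Sig) : Type where
  | var : ℕ → Pat S
  | cons : (c : S.C) → (Fin (S.ar c) → Pat S) → Pat S

namespace Pat

variable {S : Sig}

/-- Variables occurring in a pattern. -/
def vars : Pat S → Set ℕ
  | var x => {x}
  | cons _ ps => ⋃ i, vars (ps i)

/-- Linearity: every variable occurs at most once. -/
inductive Linear : Pat S → Prop where
  | var (x : ℕ) : Linear (var x)
  | cons (c : S.C) (ps : Fin (S.ar c) → Pat S) :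
      (∀ i, Linear (ps i)) →
      (∀ i j, i ≠ j → Disjoint (vars (ps i)) (vars (ps j))) →
      Linear (cons c ps)

/-- Applying a (ground) substitution to a constructor pattern yields a value. -/
def subApp (σ : ℕ → Val S) : Pat S → Val S
  | var x => σ x
  | cons c ps => Val.mk c fun i => subApp σ (ps i)

/-- Ground semantics: the set of all ground constructor instances of `p`. -/
def sem (p : Pat S) : Set (Val S) := {v | ∃ σ : ℕ → Val S, subApp σ p = v}

/-- The instance relation, defined inductively:
a variable matches any value; `c(p₁,…,pₙ)` matches `c(v₁,…,vₙ)` iff each `pᵢ` matches `vᵢ`. -/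
def Matches : Pat S → Val S → Prop
  | var _, _ => True
  | cons c ps, v => ∃ vs : Fin (S.ar c) → Val S, v = Val.mk c vs ∧ ∀ i, Matches (ps i) (vs i)

end Pat


open scoped Classical

noncomputable instance {S : Sig} : DecidableEq (Pat S) := Classical.decEq _

/-- The ground semantics of a finite set of patterns. -/
def semF {S : Sig} (P : Finset (Pat S)) : Set (Val S) := ⋃ p ∈ P, Pat.sem p

/-- A pattern `q` is subsumed by a finite set `P` of patterns. -/
def Subsumes {S : Sig} (P : Finset (Pat S)) (q : Pat S) : Prop := Pat.sem q ⊆ semF P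

/-- `smallestSet P P'` returns `P` if `|P| < |P'|`, and `P'` otherwise. -/
noncomputable def smallestSet {S : Sig} (P P' : Finset (Pat S)) : Finset (Pat S) :=
  if P.card < P'.card then P else P'

/-- The auxiliary procedure `minimum'` of Figure 2: it processes the patterns one
by one maintaining a kernel; if the current pattern `q` is subsumed by the
remaining patterns together with the kernel it returns the smaller of the results
of recursing with `q` added to the kernel and of recursing with `q` discarded;
otherwise it adds `q` to the kernel. -/
noncomputable def minimum' {S : Sig} : List (Pat S) → Finset (Pat S) → Finset (Pat S)
  | [], kernel => kernel
  | q :: P, kernel =>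
      if Subsumes (P.toFinset ∪ kernel) q then
        smallestSet (minimum' P (insert q kernel)) (minimum' P kernel)
      else
        minimum' P (insert q kernel)

/-- `minimum S = minimum' S ∅`. -/
noncomputable def minimum {S : Sig} (l : List (Pat S)) : Finset (Pat S) :=
  minimum' l ∅

/-! Every branch of `minimum'` keeps the kernel and stays a valid subset, and a pattern that
is not subsumed by the rest must lie in every valid subset. So at a subsumed pattern the two
recursive calls range exactly over the valid subsets that contain it and those that do not,
and the smaller of their optima is the overall optimum. -/

section

variable {S : Sig}

lemma semF_insert (q : Pat S) (P : Finset (Pat S)) :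
    semF (insert q P) = Pat.sem q ∪ semF P :=
  Finset.set_biUnion_insert q P Pat.sem

lemma semF_mono {P Q : Finset (Pat S)} (h : P ⊆ Q) : semF P ⊆ semF Q :=
  Set.biUnion_subset_biUnion_left (Finset.coe_subset.mpr h)

lemma semF_insert_of_subsumes {U : Finset (Pat S)} {q : Pat S} (hq : Subsumes U q) :
    semF (insert q U) = semF U := by
  rw [semF_insert, Set.union_eq_self_of_subset_left hq]

def IsValidSubset (U P : Finset (Pat S)) : Prop :=
  P ⊆ U ∧ semF P = semF U

def IsMinValidSubsetOver (K U M : Finset (Pat S)) : Prop :=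
  K ⊆ M ∧ IsValidSubset U M ∧ ∀ P, K ⊆ P → IsValidSubset U P → M.card ≤ P.card

lemma isValidSubset_insert_iff_of_not_mem {U P : Finset (Pat S)} {q : Pat S}
    (hq : Subsumes U q) (hqP : q ∉ P) : IsValidSubset (insert q U) P ↔ IsValidSubset U P := by
  rw [IsValidSubset, IsValidSubset, semF_insert_of_subsumes hq, Finset.subset_insert_iff_of_notMem hqP]

lemma mem_of_isValidSubset_insert {U P : Finset (Pat S)} {q : Pat S}
    (hq : ¬Subsumes U q) (hP : IsValidSubset (insert q U) P) : q ∈ P := by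
  by_contra hqP
  obtain ⟨hPU, hsem⟩ := hP
  apply hq
  calc Pat.sem q ⊆ semF (insert q U) := semF_insert q U ▸ Set.subset_union_left
    _ = semF P := hsem.symm
    _ ⊆ semF U := semF_mono ((Finset.subset_insert_iff_of_notMem hqP).mp hPU)

lemma IsMinValidSubsetOver.of_insert_kernel {K U M : Finset (Pat S)} {q : Pat S}
    (hq : ¬Subsumes U q) (hM : IsMinValidSubsetOver (insert q K) (insert q U) M) :
    IsMinValidSubsetOver K (insert q U) M := by
  obtain ⟨hKM, hvalid, hmin⟩ := hM
  refine ⟨(Finset.insert_subset_iff.mp hKM).2, hvalid, fun P hKP hP => ?_⟩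
  exact hmin P (Finset.insert_subset (mem_of_isValidSubset_insert hq hP) hKP) hP

lemma IsMinValidSubsetOver.smallestSet {K U M₁ M₂ : Finset (Pat S)} {q : Pat S}
    (hq : Subsumes U q) (h₁ : IsMinValidSubsetOver (insert q K) (insert q U) M₁)
    (h₂ : IsMinValidSubsetOver K U M₂) :
    IsMinValidSubsetOver K (insert q U) (smallestSet M₁ M₂) := by
  obtain ⟨hKM₁, hvalid₁, hmin₁⟩ := h₁
  obtain ⟨hKM₂, hvalid₂, hmin₂⟩ := h₂
  have hle : ∀ P, K ⊆ P → IsValidSubset (insert q U) P → M₁.card ≤ P.card ∨ M₂.card ≤ P.card := by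
    intro P hKP hP
    by_cases hqP : q ∈ P
    · exact .inl (hmin₁ P (Finset.insert_subset hqP hKP) hP)
    · exact .inr (hmin₂ P hKP ((isValidSubset_insert_iff_of_not_mem hq hqP).mp hP))
  have hvalid₂' : IsValidSubset (insert q U) M₂ := by
    refine ⟨hvalid₂.1.trans (Finset.subset_insert q U), ?_⟩
    rw [semF_insert_of_subsumes hq, hvalid₂.2]
  unfold _root_.smallestSet
  split_ifs with hcard
  · refine ⟨(Finset.insert_subset_iff.mp hKM₁).2, hvalid₁, fun P hKP hP => ?_⟩
    rcases hle P hKP hP with h | h <;> omega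
  · refine ⟨hKM₂, hvalid₂', fun P hKP hP => ?_⟩
    rcases hle P hKP hP with h | h <;> omega

theorem minimum'_isMinValidSubsetOver (l : List (Pat S)) (K : Finset (Pat S)) :
    IsMinValidSubsetOver K (l.toFinset ∪ K) (minimum' l K) := by
  induction l generalizing K with
  | nil =>
    simp only [List.toFinset_nil, Finset.empty_union, minimum']
    exact ⟨subset_rfl, ⟨subset_rfl, rfl⟩, fun P hKP hP => Finset.card_le_card hKP⟩
  | cons q l ih =>
    have hU : (q :: l).toFinset ∪ K = insert q (l.toFinset ∪ K) := by
      rw [List.toFinset_cons, Finset.insert_union]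
    have h₁ := ih (insert q K)
    rw [Finset.union_insert] at h₁
    rw [hU, minimum']
    split_ifs with hq
    · exact h₁.smallestSet hq (ih K)
    · exact h₁.of_insert_kernel hq

end

theorem stmt8_general (S : Sig) (l : List (Pat S)) :
    minimum l ⊆ l.toFinset ∧
    semF (minimum l) = semF l.toFinset ∧
    ∀ P'' ⊆ l.toFinset, semF P'' = semF l.toFinset → (minimum l).card ≤ P''.card := by
  obtain ⟨-, ⟨hsub, hsem⟩, hmin⟩ := minimum'_isMinValidSubsetOver l ∅
  rw [Finset.union_empty] at hsub hsem hmin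
  exact ⟨hsub, hsem, fun P hP hsemP => hmin P (Finset.empty_subset P) ⟨hP, hsemP⟩⟩

/-- Minimal subset: `minimum` computes a valid subset of `S`
of minimum cardinality. -/
theorem stmt8 (S : Sig) (l : List (Pat S)) (hnd : l.Nodup)
    (hlin : ∀ p ∈ l, Pat.Linear p) :
    minimum l ⊆ l.toFinset ∧
    semF (minimum l) = semF l.toFinset ∧
    ∀ P'' ⊆ l.toFinset, semF P'' = semF l.toFinset → (minimum l).card ≤ P''.card :=
  stmt8_general S l
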